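/- Let 0 < α < 1, η > 0, and let s : [0,η] → (0,1] be continuous. Then ∫₀^η (e^{−αξ}/s(ξ)) · exp(−∫_ξ^η (1/s(ρ)) dρ) dξ ≤ e^{−αη}/(1−α). -/

import Mathlib

open Real Set

/-!
Write `f = 1/s ≥ 1` and `g(ξ) = exp(-αξ - ∫_ξ^η f)`, so that `g' = (f - α) g`. Since `f ≥ 1` and
`0 ≤ α < 1`, we have `f ≤ (f - α)/(1 - α)`, hence the integrand `e^{-αξ} f(ξ) e^{-∫_ξ^η f}` is at most
`g'(ξ)/(1 - α)`, whose integral is `(g(η) - g(0))/(1 - α) ≤ e^{-αη}/(1 - α)`.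
-/

section KernelEstimate

variable {f : ℝ → ℝ} {a b α : ℝ}

theorem continuousOn_exp_sub_integral (hf : ContinuousOn f (Icc a b)) (hab : a ≤ b) :
    ContinuousOn (fun x => exp (-α * x - ∫ ρ in x..b, f ρ)) (Icc a b) := by
  have hF : ContinuousOn (fun x => ∫ ρ in x..b, f ρ) (Icc a b) := by
    simpa [uIcc_of_le hab] using intervalIntegral.continuousOn_primitive_interval_left
      (hf.integrableOn_Icc.mono_set (uIcc_of_le hab).subset)
  exact ((continuousOn_const.mul continuousOn_id).sub hF).rexp

theorem hasDerivAt_exp_sub_integral (hf : ContinuousOn f (Icc a b)) {ξ : ℝ} (hξ : ξ ∈ Ioo a b) :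
    HasDerivAt (fun x => exp (-α * x - ∫ ρ in x..b, f ρ))
      ((f ξ - α) * exp (-α * ξ - ∫ ρ in ξ..b, f ρ)) ξ := by
  have hF : HasDerivAt (fun x => ∫ ρ in x..b, f ρ) (-f ξ) ξ :=
    intervalIntegral.integral_hasDerivAt_left
      ((hf.mono (Icc_subset_Icc hξ.1.le le_rfl)).intervalIntegrable_of_Icc hξ.2.le)
      ((hf.mono Ioo_subset_Icc_self).stronglyMeasurableAtFilter isOpen_Ioo ξ hξ)
      (hf.continuousAt (Icc_mem_nhds hξ.1 hξ.2))
  have hexponent : HasDerivAt (fun x => -α * x - ∫ ρ in x..b, f ρ) (-α * 1 - -f ξ) ξ :=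
    ((hasDerivAt_id' ξ).const_mul (-α)).sub hF
  convert hexponent.exp using 1
  ring

theorem integral_sub_mul_exp_sub_integral (hf : ContinuousOn f (Icc a b)) (hab : a ≤ b) :
    ∫ ξ in a..b, (f ξ - α) * exp (-α * ξ - ∫ ρ in ξ..b, f ρ) =
      exp (-α * b) - exp (-α * a - ∫ ρ in a..b, f ρ) := by
  rw [intervalIntegral.integral_eq_sub_of_hasDerivAt_of_le hab
    (continuousOn_exp_sub_integral hf hab) (fun ξ hξ => hasDerivAt_exp_sub_integral hf hξ)]
  · simp only [intervalIntegral.integral_same, sub_zero]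
  · exact ((hf.sub continuousOn_const).mul
      (continuousOn_exp_sub_integral hf hab)).intervalIntegrable_of_Icc hab

theorem integral_exp_mul_mul_exp_neg_integral_le (hα0 : 0 ≤ α) (hα1 : α < 1)
    (hf : ContinuousOn f (Icc a b)) (hf1 : ∀ x ∈ Icc a b, 1 ≤ f x) (hab : a ≤ b) :
    ∫ ξ in a..b, exp (-α * ξ) * f ξ * exp (-∫ ρ in ξ..b, f ρ) ≤ exp (-α * b) / (1 - α) := by
  have h1α : 0 < 1 - α := sub_pos.2 hα1
  have hg := continuousOn_exp_sub_integral (α := α) hf hab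
  calc ∫ ξ in a..b, exp (-α * ξ) * f ξ * exp (-∫ ρ in ξ..b, f ρ)
      = ∫ ξ in a..b, f ξ * exp (-α * ξ - ∫ ρ in ξ..b, f ρ) :=
        intervalIntegral.integral_congr fun ξ _ => by rw [sub_eq_add_neg, exp_add]; ring
    _ ≤ ∫ ξ in a..b, (f ξ - α) * exp (-α * ξ - ∫ ρ in ξ..b, f ρ) / (1 - α) := by
        refine intervalIntegral.integral_mono_on hab ((hf.mul hg).intervalIntegrable_of_Icc hab)
          ((((hf.sub continuousOn_const).mul hg).div_const _).intervalIntegrable_of_Icc hab)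
          fun ξ hξ => ?_
        rw [le_div_iff₀ h1α, mul_right_comm]
        exact mul_le_mul_of_nonneg_right (by linarith [mul_nonneg hα0 (sub_nonneg.2 (hf1 ξ hξ))])
          (exp_pos _).le
    _ = (exp (-α * b) - exp (-α * a - ∫ ρ in a..b, f ρ)) / (1 - α) := by
        rw [intervalIntegral.integral_div, integral_sub_mul_exp_sub_integral hf hab]
    _ ≤ exp (-α * b) / (1 - α) := by
        gcongr
        linarith [exp_pos (-α * a - ∫ ρ in a..b, f ρ)]

end KernelEstimate

/-- Exponential kernel estimate along characteristics: for `0 < α < 1`, `η > 0` and a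
continuous function `s : [0,η] → (0,1]`,
`∫₀^η (e^{-αξ}/s(ξ)) exp(-∫_ξ^η dρ/s(ρ)) dξ ≤ e^{-αη}/(1-α)`. -/
theorem stmt_19 (α η : ℝ) (hα0 : 0 < α) (hα1 : α < 1) (hη : 0 < η)
    (s : ℝ → ℝ) (hs : ContinuousOn s (Set.Icc 0 η))
    (hrange : ∀ x ∈ Set.Icc (0:ℝ) η, 0 < s x ∧ s x ≤ 1) :
    (∫ ξ in (0:ℝ)..η, (Real.exp (-α * ξ) / s ξ) * Real.exp (-(∫ ρ in ξ..η, 1 / s ρ)))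
      ≤ Real.exp (-α * η) / (1 - α) := by
  have hf : ContinuousOn (fun ρ => 1 / s ρ) (Icc 0 η) :=
    continuousOn_const.div hs fun x hx => (hrange x hx).1.ne'
  have hf1 : ∀ x ∈ Icc 0 η, 1 ≤ 1 / s x := fun x hx =>
    one_le_one_div (hrange x hx).1 (hrange x hx).2
  simpa only [mul_one_div] using
    integral_exp_mul_mul_exp_neg_integral_le hα0.le hα1 hf hf1 hη.le
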